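/- Let A* ∈ ℝ^{S×A} be the optimal advantage function of a discounted MDP with A*(s, a*_s) = 0 and A*(s,a) ≤ 0, let π* be a deterministic optimal policy and π a deterministic policy agreeing with π* on all states except s_0 where π(a_0|s_0) = 1 with a_0 ≠ a*_{s_0}. Then for the state-action distributions it holds that ‖d^{π*} - d^π‖_TV ≥ d^π(s_0), and consequently (R* - R(π))/‖d^{π*} - d^π‖_TV ≤ -(1-γ)⁻¹ A*(s_0, a_0); therefore Δ ≤ Δ_K := -(1-γ)⁻¹ max{A*(s,a) : a ≠ a*_s}. -/
import Mathlib


open Finset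

/-- Total variation distance between two state-action distributions. -/
noncomputable def tvSA {S A : Type*} [Fintype S] [Fintype A]
    (d₁ d₂ : S → A → ℝ) : ℝ :=
  (1 / 2) * ∑ s, ∑ a, |d₁ s a - d₂ s a|

theorem stmt19 {S A : Type*} [Fintype S] [Fintype A]
    (γ : ℝ) (hγ0 : 0 ≤ γ) (hγ1 : γ < 1)
    -- `astar s` is the optimal action in state `s`; the optimal deterministic
    -- policy `π*` is `astar`; `Astar` is the optimal advantage function
    (astar : S → A) (Astar : S → A → ℝ)
    (hA0 : ∀ s, Astar s (astar s) = 0)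
    (hAneg : ∀ s a, Astar s a ≤ 0)
    -- deterministic policies `π : S → A` induce state-action distributions `d π`
    (d : (S → A) → S → A → ℝ)
    (hd0 : ∀ π s a, 0 ≤ d π s a)
    (hdsupp : ∀ π s a, a ≠ π s → d π s a = 0)
    (hdsum : ∀ π, ∑ s, ∑ a, d π s a = 1)
    -- rewards and the performance difference lemma
    (R : (S → A) → ℝ) (Rstar : ℝ)
    (hRstar : R astar = Rstar)
    (hPD : ∀ π, R π - Rstar = (1 - γ)⁻¹ * ∑ s, ∑ a, d π s a * Astar s a)
    -- `π` agrees with `π* = astar` on all states except `s0`, where it plays `a0`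
    (π : S → A) (s0 : S) (a0 : A) (ha0 : a0 ≠ astar s0)
    (hπ0 : π s0 = a0) (hπ : ∀ s, s ≠ s0 → π s = astar s)
    -- the constants `Δ` and `Δ_K`
    (Δ : ℝ)
    (hΔ : IsLeast {r : ℝ | ∃ (π' : S → A) (s' : S) (a' : A), a' ≠ astar s' ∧
        π' s' = a' ∧ (∀ s, s ≠ s' → π' s = astar s) ∧
        r = (Rstar - R π') / tvSA (d astar) (d π')} Δ)
    (M : ℝ) (hM : IsGreatest {y : ℝ | ∃ s a, a ≠ astar s ∧ y = Astar s a} M)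
    (ΔK : ℝ) (hΔK : ΔK = -((1 - γ)⁻¹ * M)) :
    tvSA (d astar) (d π) ≥ ∑ a, d π s0 a ∧
    (Rstar - R π) / tvSA (d astar) (d π) ≤ -((1 - γ)⁻¹ * Astar s0 a0) ∧
    Δ ≤ ΔK := by
  classical
  have hinv : 0 ≤ (1 - γ)⁻¹ := by
    have : 0 < 1 - γ := by linarith
    positivity
  -- reduction of the double sum in the PD lemma
  have hsum_eq : ∀ (π' : S → A) (s' : S) (a' : A), π' s' = a' →
      (∀ s, s ≠ s' → π' s = astar s) →
      ∑ s, ∑ a, d π' s a * Astar s a = d π' s' a' * Astar s' a' := by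
    intro π' s' a' hps hpo
    rw [Finset.sum_eq_single s']
    · rw [Finset.sum_eq_single a']
      · intro a _ hne
        rw [hdsupp π' s' a (by rw [hps]; exact hne), zero_mul]
      · intro h; exact absurd (Finset.mem_univ a') h
    · intro s _ hne
      apply Finset.sum_eq_zero
      intro a _
      by_cases h : a = π' s
      · rw [h, hpo s hne, hA0, mul_zero]
      · rw [hdsupp π' s a h, zero_mul]
    · intro h; exact absurd (Finset.mem_univ s') h
  -- TV lower bound
  have htv : ∀ (π' : S → A) (s' : S) (a' : A), a' ≠ astar s' →
      d π' s' a' ≤ tvSA (d astar) (d π') := by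
    intro π' s' a' ha'
    have hzero : ∑ s, ∑ a, (d astar s a - d π' s a) = 0 := by
      simp [Finset.sum_sub_distrib, hdsum]
    have h2 : 2 * tvSA (d astar) (d π')
        = ∑ s, ∑ a, (|d astar s a - d π' s a| - (d astar s a - d π' s a)) := by
      unfold tvSA
      rw [show (∑ s, ∑ a, (|d astar s a - d π' s a| - (d astar s a - d π' s a)))
          = (∑ s, ∑ a, |d astar s a - d π' s a|)
            - ∑ s, ∑ a, (d astar s a - d π' s a) by
        simp [Finset.sum_sub_distrib]]
      rw [hzero]; ring
    have hterm : ∀ s a, 0 ≤ |d astar s a - d π' s a| - (d astar s a - d π' s a) := by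
      intro s a; have := le_abs_self (d astar s a - d π' s a); linarith
    have hle : (|d astar s' a' - d π' s' a'| - (d astar s' a' - d π' s' a'))
        ≤ ∑ s, ∑ a, (|d astar s a - d π' s a| - (d astar s a - d π' s a)) := by
      calc (|d astar s' a' - d π' s' a'| - (d astar s' a' - d π' s' a'))
          ≤ ∑ a, (|d astar s' a - d π' s' a| - (d astar s' a - d π' s' a)) :=
            Finset.single_le_sum (fun a _ => hterm s' a) (Finset.mem_univ a')
        _ ≤ ∑ s, ∑ a, (|d astar s a - d π' s a| - (d astar s a - d π' s a)) :=
            Finset.single_le_sum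
              (fun s _ => Finset.sum_nonneg (fun a _ => hterm s a))
              (Finset.mem_univ s')
    have hda : d astar s' a' = 0 := hdsupp astar s' a' ha'
    have hd0' := hd0 π' s' a'
    have habs : |d astar s' a' - d π' s' a'| = d π' s' a' := by
      rw [hda]; simp [abs_of_nonpos, hd0']
    rw [← h2, habs, hda] at hle
    linarith
  -- key bound for the ratio
  have key : ∀ (π' : S → A) (s' : S) (a' : A), a' ≠ astar s' → π' s' = a' →
      (∀ s, s ≠ s' → π' s = astar s) →
      (Rstar - R π') / tvSA (d astar) (d π') ≤ -((1 - γ)⁻¹ * Astar s' a') := by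
    intro π' s' a' ha' hps hpo
    have hRdiff : Rstar - R π' = (1 - γ)⁻¹ * (-(d π' s' a' * Astar s' a')) := by
      have h := hPD π'
      rw [hsum_eq π' s' a' hps hpo] at h
      linarith
    have htv' := htv π' s' a' ha'
    have hd0' := hd0 π' s' a'
    have hAle := hAneg s' a'
    have hrhs : 0 ≤ -((1 - γ)⁻¹ * Astar s' a') := by nlinarith
    rcases eq_or_lt_of_le (le_trans hd0' htv') with hT | hT
    · rw [← hT, div_zero]; exact hrhs
    · rw [div_le_iff₀ hT, hRdiff]
      nlinarith [mul_nonneg hinv (neg_nonneg.mpr hAle)]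
  refine ⟨?_, key π s0 a0 ha0 hπ0 hπ, ?_⟩
  · have hsum : ∑ a, d π s0 a = d π s0 a0 := by
      rw [Finset.sum_eq_single a0]
      · intro a _ hne; exact hdsupp π s0 a (by rw [hπ0]; exact hne)
      · intro h; exact absurd (Finset.mem_univ a0) h
    rw [hsum]
    exact htv π s0 a0 ha0
  · obtain ⟨s', a', ha', hMA⟩ := hM.1
    set π' : S → A := Function.update astar s' a' with hπ'def
    have hps : π' s' = a' := Function.update_self _ _ _
    have hpo : ∀ s, s ≠ s' → π' s = astar s := fun s hs =>
      Function.update_of_ne hs _ _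
    have hmem : (Rstar - R π') / tvSA (d astar) (d π') ∈
        {r : ℝ | ∃ (π'' : S → A) (s'' : S) (a'' : A), a'' ≠ astar s'' ∧
          π'' s'' = a'' ∧ (∀ s, s ≠ s'' → π'' s = astar s) ∧
          r = (Rstar - R π'') / tvSA (d astar) (d π'')} :=
      ⟨π', s', a', ha', hps, hpo, rfl⟩
    calc Δ ≤ (Rstar - R π') / tvSA (d astar) (d π') := hΔ.2 hmem
      _ ≤ -((1 - γ)⁻¹ * Astar s' a') := key π' s' a' ha' hps hpo
      _ = ΔK := by rw [hΔK, hMA]
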